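/- (Unconditional energy dissipation for the sweeping dimensional splitting scheme S2.) Let N ≥ 2, Δx, Δy, Δt > 0, H : ℝ → ℝ convex and differentiable, V ∈ ℝ^{N×N}, and w : ℤ² → ℝ with w(p,q) = w(−p,q) = w(p,−q). Consider the sweeping S2 scheme: an x-sweep ρ^{n,(0)} = ρⁿ, …, ρ^{n,(N)} = ρ^{n+1/2} in which at stage r only row j = r is updated via ρ^{n,(r)}_{i,r} = ρ^{n,(r−1)}_{i,r} − (Δt/Δx)(F^{(r)}_{i+1/2,r} − F^{(r)}_{i−1/2,r}), with F^{(r)}_{i+1/2,r} = ρ^{n,(r)}_{i,r}(u^{(r)}_{i+1/2,r})⁺ + ρ^{n,(r)}_{i+1,r}(u^{(r)}_{i+1/2,r})⁻ (zero boundary fluxes), u^{(r)}_{i+1/2,r} = −(ξ^{(r)}_{i+1,r} − ξ^{(r)}_{i,r})/Δx, ξ^{(r)}_{i,j} = H'(ρ^{n,(r)}_{i,j}) + V_{ij} + ΔxΔy·∑_{k,l} w(i−k,j−l)·ρ̂^{(r)}_{k,l}, where ρ̂^{(r)}_{k,l} = ρ^{**,(r)}_{k,l} if l = r and ρ̂^{(r)}_{k,l}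 = ρ^{n,(r−1)}_{k,l} otherwise; followed by an analogous column-by-column y-sweep ρ^{n+1/2,(0)} = ρ^{n+1/2}, …, ρ^{n+1/2,(N)} = ρⁿ⁺¹ with fluxes built from the implicit column values and convolution variable equal to ρ^{***,(r)} on column k = r and ρ^{n+1/2,(r−1)} elsewhere. Assume ρⁿ has nonnegative entries (so all iterates are nonnegative by the unconditional positivity of S2). If for every r one of the following holds: (i) ρ^{**,(r)} = (ρ^{n,(r)} + ρ^{n,(r−1)})/2 and ρ^{***,(r)} = (ρ^{n+1/2,(r)} + ρ^{n+1/2,(r−1)})/2 (any kernel); (ii) ρ^{**,(r)} = ρ^{n,(r−1)} and ρ^{***,(r)} = ρ^{n+1/2,(r−1)} and the kernel w is negative definite; (iii) ρ^{**,(r)} = ρ^{n,(r)} and ρ^{***,(r)} = ρ^{n+1/2,(r)} and the kernel w is positive definite; then E_Δ(ρⁿ⁺¹) ≤ E_Δ(ρⁿ), with no CFL restriction; indeed the discrete energy decreases at every individual stage of both sweeps. -/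

import Mathlib

/-!
Each stage of a sweep is a one-dimensional implicit upwind step on a single row (or column).
Convexity of `H` and the admissible choice of the convolution variable bound the energy change of
a stage by `ΔxΔy ∑ (ρ^{(r)} − ρ^{(r−1)}) ξ^{(r)}`; summation by parts turns this into
`−ΔxΔy Δt ∑ u F`, and `u F ≥ 0` because on a nonnegative density the upwind flux has the sign of
the velocity. A stage stays nonnegative because no upwind flux goes from a nonnegative cell into a
negative one: summed over the negative cells, the update gives a total at least that of the old,
nonnegative values there, so there are no negative cells.
-/

/-- Positive part `z⁺ = max(z,0)`. -/
noncomputable def pospart (z : ℝ) : ℝ := max z 0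

/-- Negative part `z⁻ = min(z,0)`. -/
noncomputable def negpart (z : ℝ) : ℝ := min z 0

/-- The two-dimensional discrete free energy
`E_Δ(ρ) = ΔxΔy·(∑ H(ρ_{ij}) + ∑ V_{ij}ρ_{ij} + (ΔxΔy/2)·∑ w(i−k,j−l)ρ_{ij}ρ_{kl})`. -/
noncomputable def Edisc2 (N : ℕ) (dx dy : ℝ) (H : ℝ → ℝ) (V : ℕ → ℕ → ℝ)
    (w : ℤ → ℤ → ℝ) (ρ : ℕ → ℕ → ℝ) : ℝ :=
  dx * dy * ((∑ i ∈ Finset.Icc 1 N, ∑ j ∈ Finset.Icc 1 N, H (ρ i j))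
    + (∑ i ∈ Finset.Icc 1 N, ∑ j ∈ Finset.Icc 1 N, V i j * ρ i j)
    + dx * dy / 2 * ∑ i ∈ Finset.Icc 1 N, ∑ j ∈ Finset.Icc 1 N,
        ∑ k ∈ Finset.Icc 1 N, ∑ l ∈ Finset.Icc 1 N,
          w ((i : ℤ) - (k : ℤ)) ((j : ℤ) - (l : ℤ)) * ρ i j * ρ k l)

/-- The kernel `w` is negative definite: `∑ w(i−k,j−l)(a_{ij}−b_{ij})(a_{kl}−b_{kl}) ≤ 0`
for all matrices `a, b` with nonnegative entries. -/
def NegDefKer2 (N : ℕ) (w : ℤ → ℤ → ℝ) : Prop :=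
  ∀ a b : ℕ → ℕ → ℝ,
    (∀ i j, 1 ≤ i → i ≤ N → 1 ≤ j → j ≤ N → 0 ≤ a i j) →
    (∀ i j, 1 ≤ i → i ≤ N → 1 ≤ j → j ≤ N → 0 ≤ b i j) →
    ∑ i ∈ Finset.Icc 1 N, ∑ j ∈ Finset.Icc 1 N,
      ∑ k ∈ Finset.Icc 1 N, ∑ l ∈ Finset.Icc 1 N,
        w ((i : ℤ) - (k : ℤ)) ((j : ℤ) - (l : ℤ))
          * (a i j - b i j) * (a k l - b k l) ≤ 0

/-- The kernel `w` is positive definite: `∑ w(i−k,j−l)(a_{ij}−b_{ij})(a_{kl}−b_{kl}) ≥ 0`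
for all matrices `a, b` with nonnegative entries. -/
def PosDefKer2 (N : ℕ) (w : ℤ → ℤ → ℝ) : Prop :=
  ∀ a b : ℕ → ℕ → ℝ,
    (∀ i j, 1 ≤ i → i ≤ N → 1 ≤ j → j ≤ N → 0 ≤ a i j) →
    (∀ i j, 1 ≤ i → i ≤ N → 1 ≤ j → j ≤ N → 0 ≤ b i j) →
    0 ≤ ∑ i ∈ Finset.Icc 1 N, ∑ j ∈ Finset.Icc 1 N,
      ∑ k ∈ Finset.Icc 1 N, ∑ l ∈ Finset.Icc 1 N,
        w ((i : ℤ) - (k : ℤ)) ((j : ℤ) - (l : ℤ))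
          * (a i j - b i j) * (a k l - b k l)

open Finset

lemma pospart_nonneg (z : ℝ) : 0 ≤ pospart z := le_max_right z 0

lemma negpart_nonpos (z : ℝ) : negpart z ≤ 0 := min_le_right z 0

lemma mul_pospart_nonneg (z : ℝ) : 0 ≤ z * pospart z := by
  unfold pospart
  rcases le_total z 0 with h | h
  · simp [max_eq_right h]
  · rw [max_eq_left h]; exact mul_self_nonneg z

lemma mul_negpart_nonneg (z : ℝ) : 0 ≤ z * negpart z := by
  unfold negpart
  rcases le_total z 0 with h | h
  · rw [min_eq_left h]; exact mul_self_nonneg z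
  · simp [min_eq_right h]

/-- An upwind flux `x z⁺ + y z⁻` between cells of values `x` and `y` never points from a
nonnegative cell into a negative one. -/
lemma sub_negIndicator_mul_upwind_nonneg (x y z : ℝ) :
    0 ≤ ((if y < 0 then 1 else 0) - (if x < 0 then 1 else 0)) * (x * pospart z + y * negpart z) := by
  have hp := pospart_nonneg z
  have hn := negpart_nonpos z
  split_ifs with hy hx hx <;> nlinarith

lemma sum_Icc_mul_sub_pred (ξ F : ℕ → ℝ) (n : ℕ) :
    ∑ i ∈ Icc 1 (n + 1), ξ i * (F i - F (i - 1)) =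
      ξ (n + 1) * F (n + 1) - ξ 1 * F 0 - ∑ i ∈ Icc 1 n, (ξ (i + 1) - ξ i) * F i := by
  induction n with
  | zero => simp [mul_sub]
  | succ n ih =>
    rw [sum_Icc_succ_top (by omega), ih, sum_Icc_succ_top (by omega)]
    simp only [Nat.add_sub_cancel]
    ring

lemma sum_Icc_mul_sub_pred_of_eq_zero (ξ : ℕ → ℝ) {F : ℕ → ℝ} {N : ℕ}
    (hF0 : F 0 = 0) (hFN : F N = 0) :
    ∑ i ∈ Icc 1 N, ξ i * (F i - F (i - 1)) = -∑ i ∈ Icc 1 (N - 1), (ξ (i + 1) - ξ i) * F i := by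
  cases N with
  | zero => simp
  | succ n => rw [sum_Icc_mul_sub_pred, hF0, hFN]; simp

section UpwindLine

variable {N : ℕ} {lam : ℝ} {ρ β u F : ℕ → ℝ}

lemma upwind_implicit_nonneg (hlam : 0 ≤ lam) (hβ : ∀ i, 1 ≤ i → i ≤ N → 0 ≤ β i)
    (hF : ∀ i, 1 ≤ i → i ≤ N - 1 → F i = ρ i * pospart (u i) + ρ (i + 1) * negpart (u i))
    (hF0 : F 0 = 0) (hFN : F N = 0)
    (hupd : ∀ i, 1 ≤ i → i ≤ N → ρ i = β i - lam * (F i - F (i - 1))) :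
    ∀ i, 1 ≤ i → i ≤ N → 0 ≤ ρ i := by
  set χ : ℕ → ℝ := fun i => if ρ i < 0 then 1 else 0 with hχ
  have hχρ : ∀ i ∈ Icc 1 N, χ i * ρ i ≤ 0 := fun i _ => by
    simp only [hχ]; split_ifs with h <;> linarith
  have hχβ : 0 ≤ ∑ i ∈ Icc 1 N, χ i * β i := sum_nonneg fun i hi => by
    have := hβ i (mem_Icc.1 hi).1 (mem_Icc.1 hi).2
    simp only [hχ]; split_ifs <;> linarith
  have hflux : 0 ≤ ∑ i ∈ Icc 1 (N - 1), (χ (i + 1) - χ i) * F i := sum_nonneg fun i hi => by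
    rw [hF i (mem_Icc.1 hi).1 (mem_Icc.1 hi).2]
    exact sub_negIndicator_mul_upwind_nonneg _ _ _
  have hbalance : ∑ i ∈ Icc 1 N, χ i * ρ i =
      ∑ i ∈ Icc 1 N, χ i * β i + lam * ∑ i ∈ Icc 1 (N - 1), (χ (i + 1) - χ i) * F i := by
    rw [← neg_neg (∑ i ∈ Icc 1 (N - 1), _), ← sum_Icc_mul_sub_pred_of_eq_zero χ hF0 hFN,
      mul_neg, ← sub_eq_add_neg, mul_sum, ← sum_sub_distrib]
    refine sum_congr rfl fun i hi => ?_
    rw [hupd i (mem_Icc.1 hi).1 (mem_Icc.1 hi).2]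
    ring
  have hzero : ∑ i ∈ Icc 1 N, χ i * ρ i = 0 :=
    le_antisymm (sum_nonpos hχρ) (by rw [hbalance]; positivity)
  intro i h1 h2
  by_contra hneg
  push Not at hneg
  have := (sum_eq_zero_iff_of_nonpos hχρ).1 hzero i (mem_Icc.2 ⟨h1, h2⟩)
  simp only [hχ, if_pos hneg, one_mul] at this
  linarith

lemma upwind_implicit_sum_sub_mul_nonpos {h : ℝ} {ξ : ℕ → ℝ} (hh : 0 < h) (hlam : 0 ≤ lam)
    (hρ : ∀ i, 1 ≤ i → i ≤ N → 0 ≤ ρ i)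
    (hu : ∀ i, 1 ≤ i → i ≤ N - 1 → u i = -(ξ (i + 1) - ξ i) / h)
    (hF : ∀ i, 1 ≤ i → i ≤ N - 1 → F i = ρ i * pospart (u i) + ρ (i + 1) * negpart (u i))
    (hF0 : F 0 = 0) (hFN : F N = 0)
    (hupd : ∀ i, 1 ≤ i → i ≤ N → ρ i = β i - lam * (F i - F (i - 1))) :
    ∑ i ∈ Icc 1 N, (ρ i - β i) * ξ i ≤ 0 := by
  have huF : ∀ i ∈ Icc 1 (N - 1), 0 ≤ u i * F i := fun i hi => by
    obtain ⟨h1, h2⟩ := mem_Icc.1 hi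
    have := mul_pospart_nonneg (u i)
    have := mul_negpart_nonneg (u i)
    have := hρ i h1 (by omega)
    have := hρ (i + 1) (by omega) (by omega)
    rw [hF i h1 h2]
    nlinarith
  calc ∑ i ∈ Icc 1 N, (ρ i - β i) * ξ i
      = -lam * ∑ i ∈ Icc 1 N, ξ i * (F i - F (i - 1)) := by
        rw [mul_sum]
        refine sum_congr rfl fun i hi => ?_
        rw [hupd i (mem_Icc.1 hi).1 (mem_Icc.1 hi).2]
        ring
    _ = -(lam * h) * ∑ i ∈ Icc 1 (N - 1), u i * F i := by
        rw [sum_Icc_mul_sub_pred_of_eq_zero ξ hF0 hFN, neg_mul_neg, mul_sum, mul_sum]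
        refine sum_congr rfl fun i hi => ?_
        rw [hu i (mem_Icc.1 hi).1 (mem_Icc.1 hi).2]
        field_simp
    _ ≤ 0 := mul_nonpos_of_nonpos_of_nonneg (by nlinarith) (sum_nonneg huF)

end UpwindLine

lemma ConvexOn.sub_le_deriv_mul_sub {f : ℝ → ℝ} (hf : ConvexOn ℝ Set.univ f) {x : ℝ}
    (hfx : DifferentiableAt ℝ f x) (y : ℝ) : f x - f y ≤ deriv f x * (x - y) := by
  rcases lt_trichotomy x y with h | rfl | h
  · have h2 := hf.deriv_le_slope (Set.mem_univ x) (Set.mem_univ y) h hfx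
    rw [slope_def_field, le_div_iff₀ (by linarith)] at h2
    nlinarith
  · simp
  · have h2 := hf.slope_le_deriv (Set.mem_univ y) (Set.mem_univ x) h hfx
    rw [slope_def_field, div_le_iff₀ (by linarith)] at h2
    nlinarith

def EqOnGrid (N : ℕ) (x y : ℕ → ℕ → ℝ) : Prop :=
  ∀ i j, 1 ≤ i → i ≤ N → 1 ≤ j → j ≤ N → x i j = y i j

def NonnegOnGrid (N : ℕ) (x : ℕ → ℕ → ℝ) : Prop :=
  ∀ i j, 1 ≤ i → i ≤ N → 1 ≤ j → j ≤ N → 0 ≤ x i j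

lemma EqOnGrid.of_mem {N : ℕ} {x y : ℕ → ℕ → ℝ} (h : EqOnGrid N x y) {i j : ℕ}
    (hi : i ∈ Icc 1 N) (hj : j ∈ Icc 1 N) : x i j = y i j :=
  h i j (mem_Icc.1 hi).1 (mem_Icc.1 hi).2 (mem_Icc.1 hj).1 (mem_Icc.1 hj).2

noncomputable def kerForm (N : ℕ) (w : ℤ → ℤ → ℝ) (x y : ℕ → ℕ → ℝ) : ℝ :=
  ∑ i ∈ Icc 1 N, ∑ j ∈ Icc 1 N, ∑ k ∈ Icc 1 N, ∑ l ∈ Icc 1 N,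
    w ((i : ℤ) - (k : ℤ)) ((j : ℤ) - (l : ℤ)) * x i j * y k l

section KerForm

variable {N : ℕ} {w : ℤ → ℤ → ℝ}

lemma kerForm_comm (hw1 : ∀ p q : ℤ, w (-p) q = w p q) (hw2 : ∀ p q : ℤ, w p (-q) = w p q)
    (x y : ℕ → ℕ → ℝ) : kerForm N w x y = kerForm N w y x := by
  have hw : ∀ i j k l : ℕ, w ((k : ℤ) - i) ((l : ℤ) - j) = w ((i : ℤ) - k) ((j : ℤ) - l) :=
    fun i j k l => by rw [← neg_sub, hw1, ← neg_sub (j : ℤ), hw2]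
  calc kerForm N w x y
      = ∑ i ∈ Icc 1 N, ∑ k ∈ Icc 1 N, ∑ j ∈ Icc 1 N, ∑ l ∈ Icc 1 N,
          w ((i : ℤ) - k) ((j : ℤ) - l) * x i j * y k l :=
        sum_congr rfl fun _ _ => Finset.sum_comm
    _ = ∑ k ∈ Icc 1 N, ∑ i ∈ Icc 1 N, ∑ l ∈ Icc 1 N, ∑ j ∈ Icc 1 N,
          w ((i : ℤ) - k) ((j : ℤ) - l) * x i j * y k l :=
        Finset.sum_comm.trans (sum_congr rfl fun _ _ => sum_congr rfl fun _ _ => Finset.sum_comm)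
    _ = kerForm N w y x := by
        simp only [kerForm]
        refine sum_congr rfl fun k _ => ?_
        rw [Finset.sum_comm]
        refine sum_congr rfl fun l _ => sum_congr rfl fun i _ => sum_congr rfl fun j _ => ?_
        rw [hw]
        ring

lemma kerForm_sub_left (x y z : ℕ → ℕ → ℝ) :
    kerForm N w (x - y) z = kerForm N w x z - kerForm N w y z := by
  simp only [kerForm, Pi.sub_apply, ← sum_sub_distrib, mul_sub, sub_mul]

lemma kerForm_add_right (x y z : ℕ → ℕ → ℝ) :
    kerForm N w x (y + z) = kerForm N w x y + kerForm N w x z := by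
  simp only [kerForm, Pi.add_apply, ← sum_add_distrib, mul_add]

lemma kerForm_smul_right (c : ℝ) (x y : ℕ → ℕ → ℝ) :
    kerForm N w x (c • y) = c * kerForm N w x y := by
  simp only [kerForm, Pi.smul_apply, smul_eq_mul, mul_sum]
  refine sum_congr rfl fun _ _ => sum_congr rfl fun _ _ => sum_congr rfl fun _ _ =>
    sum_congr rfl fun _ _ => by ring

lemma kerForm_congr {x x' y y' : ℕ → ℕ → ℝ} (hx : EqOnGrid N x x') (hy : EqOnGrid N y y') :
    kerForm N w x y = kerForm N w x' y' :=
  sum_congr rfl fun _ hi => sum_congr rfl fun _ hj => sum_congr rfl fun _ hk =>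
    sum_congr rfl fun _ hl => by rw [hx.of_mem hi hj, hy.of_mem hk hl]

end KerForm

/-- The admissible choices (i)–(iii) of the convolution variable `c` for a stage `b ↦ a`. -/
def AdmissibleConv (N : ℕ) (w : ℤ → ℤ → ℝ) (a b c : ℕ → ℕ → ℝ) : Prop :=
  EqOnGrid N c (fun k l => (a k l + b k l) / 2) ∨ (EqOnGrid N c b ∧ NegDefKer2 N w) ∨
    (EqOnGrid N c a ∧ PosDefKer2 N w)

-- `K(a,a) − K(b,b) − 2K(a−b,c) = K(a−b, a+b−2c)`, which is `0`, `K(a−b,a−b)` or `−K(a−b,a−b)` in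
-- the three cases.
lemma kerForm_self_sub_le {N : ℕ} {w : ℤ → ℤ → ℝ}
    (hw1 : ∀ p q : ℤ, w (-p) q = w p q) (hw2 : ∀ p q : ℤ, w p (-q) = w p q)
    {a b c : ℕ → ℕ → ℝ} (ha : NonnegOnGrid N a) (hb : NonnegOnGrid N b)
    (hc : AdmissibleConv N w a b c) :
    kerForm N w a a - kerForm N w b b ≤ 2 * kerForm N w (a - b) c := by
  have hsplit : kerForm N w a a - kerForm N w b b =
      kerForm N w (a - b) a + kerForm N w (a - b) b := by
    rw [kerForm_sub_left, kerForm_sub_left, kerForm_comm hw1 hw2 b a]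
    ring
  have hda : kerForm N w (a - b) a = kerForm N w (a - b) (a - b) + kerForm N w (a - b) b := by
    rw [← kerForm_add_right, sub_add_cancel]
  rcases hc with hc | ⟨hc, hneg⟩ | ⟨hc, hpos⟩
  · have : EqOnGrid N c ((1 / 2 : ℝ) • (a + b)) := fun k l h1 h2 h3 h4 => by
      simp only [hc k l h1 h2 h3 h4, Pi.smul_apply, Pi.add_apply, smul_eq_mul]
      ring
    rw [hsplit, kerForm_congr (fun _ _ _ _ _ _ => rfl) this, kerForm_smul_right,
      kerForm_add_right]
    linarith
  · have hdd : kerForm N w (a - b) (a - b) ≤ 0 := hneg a b ha hb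
    rw [hsplit, kerForm_congr (fun _ _ _ _ _ _ => rfl) hc]
    linarith
  · have hdd : 0 ≤ kerForm N w (a - b) (a - b) := hpos a b ha hb
    rw [hsplit, kerForm_congr (fun _ _ _ _ _ _ => rfl) hc]
    linarith

lemma AdmissibleConv.ite {N : ℕ} {w : ℤ → ℤ → ℝ} {a b c : ℕ → ℕ → ℝ}
    (hc : AdmissibleConv N w a b c) {L : ℕ → ℕ → Prop} [DecidableRel L]
    (hkeep : ∀ k l, 1 ≤ k → k ≤ N → 1 ≤ l → l ≤ N → ¬ L k l → a k l = b k l) :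
    AdmissibleConv N w a b (fun k l => if L k l then c k l else b k l) := by
  have key : ∀ t : ℕ → ℕ → ℝ, EqOnGrid N c t →
      (∀ k l, 1 ≤ k → k ≤ N → 1 ≤ l → l ≤ N → ¬ L k l → b k l = t k l) →
      EqOnGrid N (fun k l => if L k l then c k l else b k l) t :=
    fun t hct hbt k l h1 h2 h3 h4 => by
      dsimp only
      split_ifs with hL
      exacts [hct k l h1 h2 h3 h4, hbt k l h1 h2 h3 h4 hL]
  rcases hc with hc | ⟨hc, hw⟩ | ⟨hc, hw⟩
  · refine Or.inl (key _ hc fun k l h1 h2 h3 h4 hL => ?_)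
    rw [hkeep k l h1 h2 h3 h4 hL]
    ring
  · exact Or.inr (Or.inl ⟨key _ hc fun _ _ _ _ _ _ _ => rfl, hw⟩)
  · exact Or.inr (Or.inr ⟨key _ hc fun k l h1 h2 h3 h4 hL => (hkeep k l h1 h2 h3 h4 hL).symm, hw⟩)

noncomputable def discretePotential (N : ℕ) (dx dy : ℝ) (H : ℝ → ℝ) (V : ℕ → ℕ → ℝ)
    (w : ℤ → ℤ → ℝ) (ρ c : ℕ → ℕ → ℝ) (i j : ℕ) : ℝ :=
  deriv H (ρ i j) + V i j + dx * dy * ∑ k ∈ Icc 1 N, ∑ l ∈ Icc 1 N,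
    w ((i : ℤ) - (k : ℤ)) ((j : ℤ) - (l : ℤ)) * c k l

section Energy

variable {N : ℕ} {dx dy : ℝ} {H : ℝ → ℝ} {V : ℕ → ℕ → ℝ} {w : ℤ → ℤ → ℝ}

lemma Edisc2_eq (ρ : ℕ → ℕ → ℝ) :
    Edisc2 N dx dy H V w ρ = dx * dy * ((∑ i ∈ Icc 1 N, ∑ j ∈ Icc 1 N, H (ρ i j))
      + (∑ i ∈ Icc 1 N, ∑ j ∈ Icc 1 N, V i j * ρ i j) + dx * dy / 2 * kerForm N w ρ ρ) :=
  rfl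

lemma Edisc2_congr {ρ σ : ℕ → ℕ → ℝ} (h : EqOnGrid N ρ σ) :
    Edisc2 N dx dy H V w ρ = Edisc2 N dx dy H V w σ := by
  have hH : ∑ i ∈ Icc 1 N, ∑ j ∈ Icc 1 N, H (ρ i j) = ∑ i ∈ Icc 1 N, ∑ j ∈ Icc 1 N, H (σ i j) :=
    sum_congr rfl fun _ hi => sum_congr rfl fun _ hj => by rw [h.of_mem hi hj]
  have hV : ∑ i ∈ Icc 1 N, ∑ j ∈ Icc 1 N, V i j * ρ i j =
      ∑ i ∈ Icc 1 N, ∑ j ∈ Icc 1 N, V i j * σ i j :=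
    sum_congr rfl fun _ hi => sum_congr rfl fun _ hj => by rw [h.of_mem hi hj]
  rw [Edisc2_eq, Edisc2_eq, kerForm_congr h h, hH, hV]

lemma Edisc2_sub_le (hdxdy : 0 ≤ dx * dy) (hH : ConvexOn ℝ Set.univ H)
    (hHd : Differentiable ℝ H)
    (hw1 : ∀ p q : ℤ, w (-p) q = w p q) (hw2 : ∀ p q : ℤ, w p (-q) = w p q)
    {a b c : ℕ → ℕ → ℝ} (ha : NonnegOnGrid N a) (hb : NonnegOnGrid N b)
    (hc : AdmissibleConv N w a b c) :
    Edisc2 N dx dy H V w a - Edisc2 N dx dy H V w b ≤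
      dx * dy * ∑ i ∈ Icc 1 N, ∑ j ∈ Icc 1 N,
        (a i j - b i j) * discretePotential N dx dy H V w a c i j := by
  have hconv : ∑ i ∈ Icc 1 N, ∑ j ∈ Icc 1 N, H (a i j) - ∑ i ∈ Icc 1 N, ∑ j ∈ Icc 1 N, H (b i j)
      ≤ ∑ i ∈ Icc 1 N, ∑ j ∈ Icc 1 N, deriv H (a i j) * (a i j - b i j) := by
    simp only [← sum_sub_distrib]
    exact sum_le_sum fun i _ => sum_le_sum fun j _ => hH.sub_le_deriv_mul_sub (hHd _) _
  have hform := kerForm_self_sub_le hw1 hw2 ha hb hc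
  have hexpand : ∑ i ∈ Icc 1 N, ∑ j ∈ Icc 1 N,
        (a i j - b i j) * discretePotential N dx dy H V w a c i j =
      ∑ i ∈ Icc 1 N, ∑ j ∈ Icc 1 N, deriv H (a i j) * (a i j - b i j)
        + (∑ i ∈ Icc 1 N, ∑ j ∈ Icc 1 N, V i j * a i j
          - ∑ i ∈ Icc 1 N, ∑ j ∈ Icc 1 N, V i j * b i j)
        + dx * dy * kerForm N w (a - b) c := by
    simp only [kerForm, discretePotential, Pi.sub_apply, mul_sum, ← sum_sub_distrib,
      ← sum_add_distrib]
    refine sum_congr rfl fun i _ => sum_congr rfl fun j _ => ?_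
    rw [mul_add, mul_sum]
    simp only [mul_sum]
    congr 1
    · ring
    · exact sum_congr rfl fun k _ => sum_congr rfl fun l _ => by ring
  rw [Edisc2_eq, Edisc2_eq, hexpand, ← mul_sub]
  refine mul_le_mul_of_nonneg_left ?_ hdxdy
  linarith [mul_le_mul_of_nonneg_left hform hdxdy]

variable {dt : ℝ}

lemma row_update_nonneg_and_Edisc2_le (hdx : 0 < dx) (hdy : 0 < dy) (hdt : 0 ≤ dt)
    (hH : ConvexOn ℝ Set.univ H) (hHd : Differentiable ℝ H)
    (hw1 : ∀ p q : ℤ, w (-p) q = w p q) (hw2 : ∀ p q : ℤ, w p (-q) = w p q)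
    {r : ℕ} (hr1 : 1 ≤ r) (hrN : r ≤ N) {a b c : ℕ → ℕ → ℝ} {ξ u F : ℕ → ℝ}
    (hb : NonnegOnGrid N b)
    (hkeep : ∀ i j, 1 ≤ i → i ≤ N → 1 ≤ j → j ≤ N → j ≠ r → a i j = b i j)
    (hξ : ∀ i, 1 ≤ i → i ≤ N →
      ξ i = discretePotential N dx dy H V w a (fun k l => if l = r then c k l else b k l) i r)
    (hu : ∀ i, 1 ≤ i → i ≤ N - 1 → u i = -(ξ (i + 1) - ξ i) / dx)
    (hF : ∀ i, 1 ≤ i → i ≤ N - 1 → F i = a i r * pospart (u i) + a (i + 1) r * negpart (u i))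
    (hF0 : F 0 = 0) (hFN : F N = 0)
    (hupd : ∀ i, 1 ≤ i → i ≤ N → a i r = b i r - dt / dx * (F i - F (i - 1)))
    (hc : AdmissibleConv N w a b c) :
    NonnegOnGrid N a ∧ Edisc2 N dx dy H V w a ≤ Edisc2 N dx dy H V w b := by
  have hlam : 0 ≤ dt / dx := div_nonneg hdt hdx.le
  have hrow := upwind_implicit_nonneg hlam (fun i h1 h2 => hb i r h1 h2 hr1 hrN) hF hF0 hFN hupd
  have ha : NonnegOnGrid N a := fun i j h1 h2 h3 h4 => by
    obtain rfl | hj := eq_or_ne j r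
    · exact hrow i h1 h2
    · rw [hkeep i j h1 h2 h3 h4 hj]
      exact hb i j h1 h2 h3 h4
  refine ⟨ha, ?_⟩
  have hE := Edisc2_sub_le (V := V) (mul_pos hdx hdy).le hH hHd hw1 hw2 ha hb
    (hc.ite (L := fun _ l => l = r) hkeep)
  have hrowsum : ∑ i ∈ Icc 1 N, ∑ j ∈ Icc 1 N, (a i j - b i j) *
        discretePotential N dx dy H V w a (fun k l => if l = r then c k l else b k l) i j =
      ∑ i ∈ Icc 1 N, (a i r - b i r) * ξ i := by
    refine sum_congr rfl fun i hi => ?_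
    obtain ⟨h1, h2⟩ := mem_Icc.1 hi
    refine (sum_eq_single_of_mem r (mem_Icc.2 ⟨hr1, hrN⟩) fun j hj hne => ?_).trans
      (by rw [hξ i h1 h2])
    rw [hkeep i j h1 h2 (mem_Icc.1 hj).1 (mem_Icc.1 hj).2 hne, sub_self, zero_mul]
  have hdiss := upwind_implicit_sum_sub_mul_nonpos hdx hlam hrow hu hF hF0 hFN hupd
  rw [hrowsum] at hE
  linarith [mul_nonpos_of_nonneg_of_nonpos (mul_pos hdx hdy).le hdiss]

lemma column_update_nonneg_and_Edisc2_le (hdx : 0 < dx) (hdy : 0 < dy) (hdt : 0 ≤ dt)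
    (hH : ConvexOn ℝ Set.univ H) (hHd : Differentiable ℝ H)
    (hw1 : ∀ p q : ℤ, w (-p) q = w p q) (hw2 : ∀ p q : ℤ, w p (-q) = w p q)
    {r : ℕ} (hr1 : 1 ≤ r) (hrN : r ≤ N) {a b c : ℕ → ℕ → ℝ} {ξ v G : ℕ → ℝ}
    (hb : NonnegOnGrid N b)
    (hkeep : ∀ i j, 1 ≤ i → i ≤ N → 1 ≤ j → j ≤ N → i ≠ r → a i j = b i j)
    (hξ : ∀ j, 1 ≤ j → j ≤ N →
      ξ j = discretePotential N dx dy H V w a (fun k l => if k = r then c k l else b k l) r j)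
    (hv : ∀ j, 1 ≤ j → j ≤ N - 1 → v j = -(ξ (j + 1) - ξ j) / dy)
    (hG : ∀ j, 1 ≤ j → j ≤ N - 1 → G j = a r j * pospart (v j) + a r (j + 1) * negpart (v j))
    (hG0 : G 0 = 0) (hGN : G N = 0)
    (hupd : ∀ j, 1 ≤ j → j ≤ N → a r j = b r j - dt / dy * (G j - G (j - 1)))
    (hc : AdmissibleConv N w a b c) :
    NonnegOnGrid N a ∧ Edisc2 N dx dy H V w a ≤ Edisc2 N dx dy H V w b := by
  have hlam : 0 ≤ dt / dy := div_nonneg hdt hdy.le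
  have hcol := upwind_implicit_nonneg hlam (fun j h1 h2 => hb r j hr1 hrN h1 h2) hG hG0 hGN hupd
  have ha : NonnegOnGrid N a := fun i j h1 h2 h3 h4 => by
    obtain rfl | hi := eq_or_ne i r
    · exact hcol j h3 h4
    · rw [hkeep i j h1 h2 h3 h4 hi]
      exact hb i j h1 h2 h3 h4
  refine ⟨ha, ?_⟩
  have hE := Edisc2_sub_le (V := V) (mul_pos hdx hdy).le hH hHd hw1 hw2 ha hb
    (hc.ite (L := fun k _ => k = r) hkeep)
  have hcolsum : ∑ i ∈ Icc 1 N, ∑ j ∈ Icc 1 N, (a i j - b i j) *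
        discretePotential N dx dy H V w a (fun k l => if k = r then c k l else b k l) i j =
      ∑ j ∈ Icc 1 N, (a r j - b r j) * ξ j := by
    refine (sum_eq_single_of_mem r (mem_Icc.2 ⟨hr1, hrN⟩) fun i hi hne => ?_).trans
      (sum_congr rfl fun j hj => by rw [hξ j (mem_Icc.1 hj).1 (mem_Icc.1 hj).2])
    refine sum_eq_zero fun j hj => ?_
    rw [hkeep i j (mem_Icc.1 hi).1 (mem_Icc.1 hi).2 (mem_Icc.1 hj).1 (mem_Icc.1 hj).2 hne,
      sub_self, zero_mul]
  have hdiss := upwind_implicit_sum_sub_mul_nonpos hdy hlam hcol hv hG hG0 hGN hupd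
  rw [hcolsum] at hE
  linarith [mul_nonpos_of_nonneg_of_nonpos (mul_pos hdx hdy).le hdiss]

end Energy

lemma sweep_nonneg_and_le {α : Type*} {P : α → Prop} {E : α → ℝ} {s : ℕ → α} {N : ℕ}
    (h0 : P (s 0)) (hstep : ∀ r, 1 ≤ r → r ≤ N → P (s (r - 1)) → P (s r) ∧ E (s r) ≤ E (s (r - 1))) :
    ∀ r, r ≤ N → P (s r) ∧ E (s r) ≤ E (s 0) := by
  intro r
  induction r with
  | zero => exact fun _ => ⟨h0, le_rfl⟩
  | succ n ih =>
    intro hn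
    obtain ⟨hP, hE⟩ := ih (by omega)
    obtain ⟨hP', hE'⟩ := hstep (n + 1) (by omega) hn hP
    exact ⟨hP', hE'.trans hE⟩

/-- `ρx r` and `ρy r` are the stages `ρ^{n,(r)}` and `ρ^{n+1/2,(r)}` of the two sweeps, so
`ρⁿ = ρx 0`, `ρ^{n+1/2} = ρx N = ρy 0` and `ρⁿ⁺¹ = ρy N`; `ρss r` and `ρsss r` are `ρ^{**,(r)}` and
`ρ^{***,(r)}`, and `F r`, `G r` the fluxes of stage `r`. -/
theorem stmt_17_general (N : ℕ) (dx dy dt : ℝ)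
    (hdx : 0 < dx) (hdy : 0 < dy) (hdt : 0 < dt)
    (H : ℝ → ℝ) (hHconv : ConvexOn ℝ Set.univ H) (hHdiff : Differentiable ℝ H)
    (V : ℕ → ℕ → ℝ) (w : ℤ → ℤ → ℝ)
    (hw1 : ∀ p q : ℤ, w (-p) q = w p q) (hw2 : ∀ p q : ℤ, w p (-q) = w p q)
    (ρx ρy ρss ρsss ξx ξy : ℕ → ℕ → ℕ → ℝ) (u v F G : ℕ → ℕ → ℝ)
    (hlink : ∀ i j, 1 ≤ i → i ≤ N → 1 ≤ j → j ≤ N → ρy 0 i j = ρx N i j)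
    -- x-sweep: at stage r only row j = r is updated, implicitly
    (hkeepx : ∀ r, 1 ≤ r → r ≤ N → ∀ i j, 1 ≤ i → i ≤ N → 1 ≤ j → j ≤ N → j ≠ r →
      ρx r i j = ρx (r - 1) i j)
    (hξx : ∀ r, 1 ≤ r → r ≤ N → ∀ i j, 1 ≤ i → i ≤ N → 1 ≤ j → j ≤ N →
      ξx r i j = deriv H (ρx r i j) + V i j
        + dx * dy * ∑ k ∈ Finset.Icc 1 N, ∑ l ∈ Finset.Icc 1 N,
            w ((i : ℤ) - (k : ℤ)) ((j : ℤ) - (l : ℤ))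
              * (if l = r then ρss r k l else ρx (r - 1) k l))
    (hu : ∀ r, 1 ≤ r → r ≤ N → ∀ i, 1 ≤ i → i ≤ N - 1 →
      u r i = -(ξx r (i + 1) r - ξx r i r) / dx)
    (hFx : ∀ r, 1 ≤ r → r ≤ N → ∀ i, 1 ≤ i → i ≤ N - 1 →
      F r i = ρx r i r * pospart (u r i) + ρx r (i + 1) r * negpart (u r i))
    (hF0 : ∀ r, 1 ≤ r → r ≤ N → F r 0 = 0)
    (hFN : ∀ r, 1 ≤ r → r ≤ N → F r N = 0)
    (hupdx : ∀ r, 1 ≤ r → r ≤ N → ∀ i, 1 ≤ i → i ≤ N →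
      ρx r i r = ρx (r - 1) i r - dt / dx * (F r i - F r (i - 1)))
    -- y-sweep: at stage r only column i = r is updated, implicitly
    (hkeepy : ∀ r, 1 ≤ r → r ≤ N → ∀ i j, 1 ≤ i → i ≤ N → 1 ≤ j → j ≤ N → i ≠ r →
      ρy r i j = ρy (r - 1) i j)
    (hξy : ∀ r, 1 ≤ r → r ≤ N → ∀ i j, 1 ≤ i → i ≤ N → 1 ≤ j → j ≤ N →
      ξy r i j = deriv H (ρy r i j) + V i j
        + dx * dy * ∑ k ∈ Finset.Icc 1 N, ∑ l ∈ Finset.Icc 1 N,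
            w ((i : ℤ) - (k : ℤ)) ((j : ℤ) - (l : ℤ))
              * (if k = r then ρsss r k l else ρy (r - 1) k l))
    (hv : ∀ r, 1 ≤ r → r ≤ N → ∀ j, 1 ≤ j → j ≤ N - 1 →
      v r j = -(ξy r r (j + 1) - ξy r r j) / dy)
    (hGy : ∀ r, 1 ≤ r → r ≤ N → ∀ j, 1 ≤ j → j ≤ N - 1 →
      G r j = ρy r r j * pospart (v r j) + ρy r r (j + 1) * negpart (v r j))
    (hG0 : ∀ r, 1 ≤ r → r ≤ N → G r 0 = 0)
    (hGN : ∀ r, 1 ≤ r → r ≤ N → G r N = 0)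
    (hupdy : ∀ r, 1 ≤ r → r ≤ N → ∀ j, 1 ≤ j → j ≤ N →
      ρy r r j = ρy (r - 1) r j - dt / dy * (G r j - G r (j - 1)))
    -- nonnegative initial datum
    (hpos : ∀ i j, 1 ≤ i → i ≤ N → 1 ≤ j → j ≤ N → 0 ≤ ρx 0 i j)
    -- admissible choice of the convolution variables, possibly different at each stage
    (hcase : ∀ r, 1 ≤ r → r ≤ N →
      ((∀ k l, 1 ≤ k → k ≤ N → 1 ≤ l → l ≤ N →
          ρss r k l = (ρx r k l + ρx (r - 1) k l) / 2) ∧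
        (∀ k l, 1 ≤ k → k ≤ N → 1 ≤ l → l ≤ N →
          ρsss r k l = (ρy r k l + ρy (r - 1) k l) / 2)) ∨
      ((∀ k l, 1 ≤ k → k ≤ N → 1 ≤ l → l ≤ N → ρss r k l = ρx (r - 1) k l) ∧
        (∀ k l, 1 ≤ k → k ≤ N → 1 ≤ l → l ≤ N → ρsss r k l = ρy (r - 1) k l) ∧
        NegDefKer2 N w) ∨
      ((∀ k l, 1 ≤ k → k ≤ N → 1 ≤ l → l ≤ N → ρss r k l = ρx r k l) ∧
        (∀ k l, 1 ≤ k → k ≤ N → 1 ≤ l → l ≤ N → ρsss r k l = ρy r k l) ∧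
        PosDefKer2 N w)) :
    Edisc2 N dx dy H V w (ρy N) ≤ Edisc2 N dx dy H V w (ρx 0) ∧
    (∀ r, 1 ≤ r → r ≤ N →
      Edisc2 N dx dy H V w (ρx r) ≤ Edisc2 N dx dy H V w (ρx (r - 1)) ∧
      Edisc2 N dx dy H V w (ρy r) ≤ Edisc2 N dx dy H V w (ρy (r - 1))) := by
  have hx : ∀ r, 1 ≤ r → r ≤ N → NonnegOnGrid N (ρx (r - 1)) →
      NonnegOnGrid N (ρx r) ∧ Edisc2 N dx dy H V w (ρx r) ≤ Edisc2 N dx dy H V w (ρx (r - 1)) :=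
    fun r h1 h2 hb => row_update_nonneg_and_Edisc2_le hdx hdy hdt.le hHconv hHdiff hw1 hw2 h1 h2
      hb (hkeepx r h1 h2) (fun i hi1 hi2 => hξx r h1 h2 i r hi1 hi2 h1 h2) (hu r h1 h2)
      (hFx r h1 h2) (hF0 r h1 h2) (hFN r h1 h2) (hupdx r h1 h2)
      ((hcase r h1 h2).imp And.left (Or.imp (fun h => ⟨h.1, h.2.2⟩) fun h => ⟨h.1, h.2.2⟩))
  have hy : ∀ r, 1 ≤ r → r ≤ N → NonnegOnGrid N (ρy (r - 1)) →
      NonnegOnGrid N (ρy r) ∧ Edisc2 N dx dy H V w (ρy r) ≤ Edisc2 N dx dy H V w (ρy (r - 1)) :=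
    fun r h1 h2 hb => column_update_nonneg_and_Edisc2_le hdx hdy hdt.le hHconv hHdiff hw1 hw2 h1 h2
      hb (hkeepy r h1 h2) (fun j hj1 hj2 => hξy r h1 h2 r j h1 h2 hj1 hj2) (hv r h1 h2)
      (hGy r h1 h2) (hG0 r h1 h2) (hGN r h1 h2) (hupdy r h1 h2)
      ((hcase r h1 h2).imp And.right (Or.imp And.right And.right))
  have hxsweep := sweep_nonneg_and_le (P := NonnegOnGrid N) (E := Edisc2 N dx dy H V w) hpos hx
  have hy0 : NonnegOnGrid N (ρy 0) := fun i j h1 h2 h3 h4 => by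
    rw [hlink i j h1 h2 h3 h4]
    exact (hxsweep N le_rfl).1 i j h1 h2 h3 h4
  have hysweep := sweep_nonneg_and_le (P := NonnegOnGrid N) (E := Edisc2 N dx dy H V w) hy0 hy
  refine ⟨?_, fun r h1 h2 => ⟨(hx r h1 h2 (hxsweep (r - 1) (by omega)).1).2,
    (hy r h1 h2 (hysweep (r - 1) (by omega)).1).2⟩⟩
  calc Edisc2 N dx dy H V w (ρy N) ≤ Edisc2 N dx dy H V w (ρy 0) := (hysweep N le_rfl).2
    _ = Edisc2 N dx dy H V w (ρx N) := Edisc2_congr hlink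
    _ ≤ Edisc2 N dx dy H V w (ρx 0) := (hxsweep N le_rfl).2

/-- unconditional energy dissipation for the sweeping dimensional
splitting scheme S2.  `ρx r` is the `r`-th stage of the x-sweep (only row `r` is updated
at stage `r`, implicitly), `ρy r` the `r`-th stage of the y-sweep, `ρⁿ = ρx 0`,
`ρ^{n+1/2} = ρx N = ρy 0`, and `ρⁿ⁺¹ = ρy N`.  The convolution variable at stage `r`
equals `ρss r` (resp. `ρsss r`) on the active row (resp. column) and the previous
iterate elsewhere.  If `ρⁿ` is nonnegative, the discrete energy decreases at every
individual stage of both sweeps, and in particular `E_Δ(ρⁿ⁺¹) ≤ E_Δ(ρⁿ)`, with no CFL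
restriction. -/
theorem stmt_17 (N : ℕ) (hN : 2 ≤ N) (dx dy dt : ℝ)
    (hdx : 0 < dx) (hdy : 0 < dy) (hdt : 0 < dt)
    (H : ℝ → ℝ) (hHconv : ConvexOn ℝ Set.univ H) (hHdiff : Differentiable ℝ H)
    (V : ℕ → ℕ → ℝ) (w : ℤ → ℤ → ℝ)
    (hw1 : ∀ p q : ℤ, w (-p) q = w p q) (hw2 : ∀ p q : ℤ, w p (-q) = w p q)
    (ρx ρy ρss ρsss ξx ξy : ℕ → ℕ → ℕ → ℝ) (u v F G : ℕ → ℕ → ℝ)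
    (hlink : ∀ i j, 1 ≤ i → i ≤ N → 1 ≤ j → j ≤ N → ρy 0 i j = ρx N i j)
    -- x-sweep: at stage r only row j = r is updated, implicitly
    (hkeepx : ∀ r, 1 ≤ r → r ≤ N → ∀ i j, 1 ≤ i → i ≤ N → 1 ≤ j → j ≤ N → j ≠ r →
      ρx r i j = ρx (r - 1) i j)
    (hξx : ∀ r, 1 ≤ r → r ≤ N → ∀ i j, 1 ≤ i → i ≤ N → 1 ≤ j → j ≤ N →
      ξx r i j = deriv H (ρx r i j) + V i j
        + dx * dy * ∑ k ∈ Finset.Icc 1 N, ∑ l ∈ Finset.Icc 1 N,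
            w ((i : ℤ) - (k : ℤ)) ((j : ℤ) - (l : ℤ))
              * (if l = r then ρss r k l else ρx (r - 1) k l))
    (hu : ∀ r, 1 ≤ r → r ≤ N → ∀ i, 1 ≤ i → i ≤ N - 1 →
      u r i = -(ξx r (i + 1) r - ξx r i r) / dx)
    (hFx : ∀ r, 1 ≤ r → r ≤ N → ∀ i, 1 ≤ i → i ≤ N - 1 →
      F r i = ρx r i r * pospart (u r i) + ρx r (i + 1) r * negpart (u r i))
    (hF0 : ∀ r, 1 ≤ r → r ≤ N → F r 0 = 0)
    (hFN : ∀ r, 1 ≤ r → r ≤ N → F r N = 0)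
    (hupdx : ∀ r, 1 ≤ r → r ≤ N → ∀ i, 1 ≤ i → i ≤ N →
      ρx r i r = ρx (r - 1) i r - dt / dx * (F r i - F r (i - 1)))
    -- y-sweep: at stage r only column i = r is updated, implicitly
    (hkeepy : ∀ r, 1 ≤ r → r ≤ N → ∀ i j, 1 ≤ i → i ≤ N → 1 ≤ j → j ≤ N → i ≠ r →
      ρy r i j = ρy (r - 1) i j)
    (hξy : ∀ r, 1 ≤ r → r ≤ N → ∀ i j, 1 ≤ i → i ≤ N → 1 ≤ j → j ≤ N →
      ξy r i j = deriv H (ρy r i j) + V i j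
        + dx * dy * ∑ k ∈ Finset.Icc 1 N, ∑ l ∈ Finset.Icc 1 N,
            w ((i : ℤ) - (k : ℤ)) ((j : ℤ) - (l : ℤ))
              * (if k = r then ρsss r k l else ρy (r - 1) k l))
    (hv : ∀ r, 1 ≤ r → r ≤ N → ∀ j, 1 ≤ j → j ≤ N - 1 →
      v r j = -(ξy r r (j + 1) - ξy r r j) / dy)
    (hGy : ∀ r, 1 ≤ r → r ≤ N → ∀ j, 1 ≤ j → j ≤ N - 1 →
      G r j = ρy r r j * pospart (v r j) + ρy r r (j + 1) * negpart (v r j))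
    (hG0 : ∀ r, 1 ≤ r → r ≤ N → G r 0 = 0)
    (hGN : ∀ r, 1 ≤ r → r ≤ N → G r N = 0)
    (hupdy : ∀ r, 1 ≤ r → r ≤ N → ∀ j, 1 ≤ j → j ≤ N →
      ρy r r j = ρy (r - 1) r j - dt / dy * (G r j - G r (j - 1)))
    -- nonnegative initial datum
    (hpos : ∀ i j, 1 ≤ i → i ≤ N → 1 ≤ j → j ≤ N → 0 ≤ ρx 0 i j)
    -- admissible choice of the convolution variables, possibly different at each stage
    (hcase : ∀ r, 1 ≤ r → r ≤ N →
      ((∀ k l, 1 ≤ k → k ≤ N → 1 ≤ l → l ≤ N →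
          ρss r k l = (ρx r k l + ρx (r - 1) k l) / 2) ∧
        (∀ k l, 1 ≤ k → k ≤ N → 1 ≤ l → l ≤ N →
          ρsss r k l = (ρy r k l + ρy (r - 1) k l) / 2)) ∨
      ((∀ k l, 1 ≤ k → k ≤ N → 1 ≤ l → l ≤ N → ρss r k l = ρx (r - 1) k l) ∧
        (∀ k l, 1 ≤ k → k ≤ N → 1 ≤ l → l ≤ N → ρsss r k l = ρy (r - 1) k l) ∧
        NegDefKer2 N w) ∨
      ((∀ k l, 1 ≤ k → k ≤ N → 1 ≤ l → l ≤ N → ρss r k l = ρx r k l) ∧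
        (∀ k l, 1 ≤ k → k ≤ N → 1 ≤ l → l ≤ N → ρsss r k l = ρy r k l) ∧
        PosDefKer2 N w)) :
    Edisc2 N dx dy H V w (ρy N) ≤ Edisc2 N dx dy H V w (ρx 0) ∧
    (∀ r, 1 ≤ r → r ≤ N →
      Edisc2 N dx dy H V w (ρx r) ≤ Edisc2 N dx dy H V w (ρx (r - 1)) ∧
      Edisc2 N dx dy H V w (ρy r) ≤ Edisc2 N dx dy H V w (ρy (r - 1))) :=
  stmt_17_general N dx dy dt hdx hdy hdt H hHconv hHdiff V w hw1 hw2 ρx ρy ρss ρsss ξx ξy u v F G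
    hlink hkeepx hξx hu hFx hF0 hFN hupdx hkeepy hξy hv hGy hG0 hGN hupdy hpos hcase
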